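/- arXiv:2502.02136 — 7 statements merged into one kernel-verified Lean document; each statement's English description precedes it below -/
import Mathlib

section
/- Let σ ≥ 0 and α ∈ ℝ with α² ≤ 3. Then for every F > 0, the equation (1 + (α - (1+2σ)ρ)²)·ρ = F² has exactly one positive real solution ρ. -/
private lemma key_mono (σ α a b : ℝ) (hσ : 0 ≤ σ) (hα : α ^ 2 ≤ 3)
    (ha : 0 ≤ a) (hab : a < b) :
    (1 + (α - (1 + 2 * σ) * a) ^ 2) * a < (1 + (α - (1 + 2 * σ) * b) ^ 2) * b := by
  nlinarith [sq_nonneg (3 * (1 + 2 * σ) * (a + b) - 4 * α), sq_nonneg (a - b),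
    mul_pos (sub_pos.2 hab) (sub_pos.2 hab),
    mul_pos (mul_pos (sub_pos.2 hab) (sub_pos.2 hab)) (sub_pos.2 hab),
    sq_nonneg ((1 + 2 * σ) * (a - b)),
    mul_nonneg hσ hσ, mul_nonneg (mul_nonneg hσ hσ) (sq_nonneg (a - b)),
    mul_nonneg hσ (sq_nonneg (a - b)),
    mul_pos (sub_pos.2 hab)
      (mul_pos (mul_pos (sub_pos.2 hab) (sub_pos.2 hab))
        (by positivity : (0:ℝ) < (1 + 2 * σ) ^ 2)),
    mul_nonneg (le_of_lt (sub_pos.2 hab)) (sq_nonneg (3 * (1 + 2 * σ) * (a + b) - 4 * α)),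
    mul_nonneg (le_of_lt (sub_pos.2 hab)) (sub_nonneg.2 hα)]

theorem stmt_1 (σ α : ℝ) (hσ : 0 ≤ σ) (hα : α ^ 2 ≤ 3) :
    ∀ F : ℝ, 0 < F →
      ∃! ρ : ℝ, 0 < ρ ∧ (1 + (α - (1 + 2 * σ) * ρ) ^ 2) * ρ = F ^ 2 := by
  intro F hF
  set f : ℝ → ℝ := fun ρ => (1 + (α - (1 + 2 * σ) * ρ) ^ 2) * ρ with hf
  have hcont : ContinuousOn f (Set.Icc 0 (F ^ 2 + 1)) := by
    apply Continuous.continuousOn; fun_prop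
  have hmem : F ^ 2 ∈ Set.Icc (f 0) (f (F ^ 2 + 1)) := by
    constructor
    · simp [hf]; positivity
    · have h1 : (F ^ 2 + 1 : ℝ) ≤ f (F ^ 2 + 1) := by
        simp only [hf]
        nlinarith [sq_nonneg (α - (1 + 2 * σ) * (F ^ 2 + 1)), sq_nonneg F]
      nlinarith
  obtain ⟨ρ, hρmem, hρeq⟩ := intermediate_value_Icc (by positivity) hcont hmem
  have hρpos : 0 < ρ := by
    rcases eq_or_lt_of_le hρmem.1 with h | h
    · exfalso
      have : f 0 = F ^ 2 := by rw [h]; exact hρeq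
      simp [hf] at this
      nlinarith
    · exact h
  refine ⟨ρ, ⟨hρpos, hρeq⟩, ?_⟩
  rintro y ⟨hy, hyeq⟩
  by_contra hne
  rcases lt_or_gt_of_ne hne with h | h
  · have := key_mono σ α y ρ hσ hα hy.le h
    simp only [hf] at hρeq
    nlinarith
  · have := key_mono σ α ρ y hσ hα hρpos.le h
    simp only [hf] at hρeq
    nlinarith
end

section
/- Let σ ≥ 0 and α < -√3. Then for every F > 0, the equation (1 + (α - (1+2σ)ρ)²)·ρ = F² has exactly one positive real solution ρ. -/
theorem stmt_2 (σ α : ℝ) (hσ : 0 ≤ σ) (hα : α < -Real.sqrt 3) :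
    ∀ F : ℝ, 0 < F →
      ∃! ρ : ℝ, 0 < ρ ∧ (1 + (α - (1 + 2 * σ) * ρ) ^ 2) * ρ = F ^ 2 := by
  intro F hF
  set c : ℝ := 1 + 2 * σ with hc
  have hc1 : 1 ≤ c := by simp [hc]; linarith
  have hα0 : α < 0 := by have := Real.sqrt_nonneg 3; linarith
  set g : ℝ → ℝ := fun ρ => (1 + (α - c * ρ) ^ 2) * ρ with hg
  have hgcont : Continuous g := by fun_prop
  have hmono : StrictMonoOn g (Set.Ici 0) := by
    apply strictMonoOn_of_deriv_pos (convex_Ici 0) hgcont.continuousOn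
    intro x hx
    rw [interior_Ici] at hx
    have h1 : HasDerivAt (fun ρ : ℝ => α - c * ρ) (-c) x := by
      simpa using ((hasDerivAt_id x).const_mul c).const_sub α
    have h2 : HasDerivAt (fun ρ : ℝ => 1 + (α - c * ρ) ^ 2)
        (2 * (α - c * x) ^ 1 * (-c)) x := (h1.pow 2).const_add 1
    have h3 : HasDerivAt g
        ((2 * (α - c * x) ^ 1 * (-c)) * x + (1 + (α - c * x) ^ 2) * 1) x :=
      h2.mul (hasDerivAt_id x)
    rw [h3.deriv]
    have hx0 : 0 < x := hx
    have hc0 : (0:ℝ) < c := lt_of_lt_of_le one_pos hc1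
    nlinarith [sq_nonneg (α - c * x), mul_pos hc0 hx0, mul_pos (mul_pos hc0 hx0) (mul_pos hc0 hx0), mul_pos (mul_pos hc0 hx0) (neg_pos.mpr hα0)]
  -- existence via IVT on [0, F^2]
  have hgF : F ^ 2 ≤ g (F ^ 2) := by
    have h1 : (1:ℝ) ≤ 1 + (α - c * F ^ 2) ^ 2 := by nlinarith [sq_nonneg (α - c * F ^ 2)]
    have := mul_le_mul_of_nonneg_right h1 (by positivity : (0:ℝ) ≤ F ^ 2)
    simpa [hg] using this
  have hg0 : g 0 = 0 := by simp [hg]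
  have hIVT : F ^ 2 ∈ g '' Set.Icc 0 (F ^ 2) := by
    apply intermediate_value_Icc (by positivity) hgcont.continuousOn
    constructor
    · rw [hg0]; positivity
    · exact hgF
  obtain ⟨ρ, hρmem, hρeq⟩ := hIVT
  have hρpos : 0 < ρ := by
    rcases lt_or_eq_of_le hρmem.1 with h | h
    · exact h
    · exfalso; rw [← h] at hρeq; rw [hg0] at hρeq; nlinarith
  refine ⟨ρ, ⟨hρpos, hρeq⟩, ?_⟩
  rintro y ⟨hy, hyeq⟩
  exact hmono.injOn (Set.mem_Ici.mpr hy.le) (Set.mem_Ici.mpr hρpos.le) (by simp only [hg]; rw [hyeq, ← hρeq])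
end

section
/- Let σ ≥ 0 and α > √3, and set ρ± = (2α ± √(α²-3))/(3(1+2σ)). Then 0 < ρ₋ < ρ₊, and both local extremal values G_α(ρ₋) and G_α(ρ₊) are positive, with G_α(ρ₊) < G_α(ρ₋). -/
theorem stmt_3 (σ α : ℝ) (hσ : 0 ≤ σ) (hα : Real.sqrt 3 < α)
    (G : ℝ → ℝ) (hG : ∀ ρ, G ρ = (1 + (α - (1 + 2 * σ) * ρ) ^ 2) * ρ)
    (ρm ρp : ℝ)
    (hρm : ρm = (2 * α - Real.sqrt (α ^ 2 - 3)) / (3 * (1 + 2 * σ)))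
    (hρp : ρp = (2 * α + Real.sqrt (α ^ 2 - 3)) / (3 * (1 + 2 * σ))) :
    0 < ρm ∧ ρm < ρp ∧ 0 < G ρm ∧ 0 < G ρp ∧ G ρp < G ρm := by
  have h3 : (0:ℝ) ≤ 3 := by norm_num
  have hsq3 : Real.sqrt 3 ^ 2 = 3 := Real.sq_sqrt h3
  have hs3n : 0 ≤ Real.sqrt 3 := Real.sqrt_nonneg 3
  have hα0 : 0 < α := lt_of_le_of_lt hs3n hα
  have hα3 : 3 < α ^ 2 := by nlinarith
  set s := Real.sqrt (α ^ 2 - 3) with hs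
  have hs2 : s ^ 2 = α ^ 2 - 3 := Real.sq_sqrt (by linarith)
  have hs0 : 0 < s := Real.sqrt_pos.2 (by linarith)
  have hsα : s < α := by nlinarith
  have hc : (0:ℝ) < 1 + 2 * σ := by linarith
  have hc3 : (0:ℝ) < 3 * (1 + 2 * σ) := by linarith
  have h1 : 0 < ρm := by
    rw [hρm]; exact div_pos (by linarith) hc3
  have h2 : ρm < ρp := by
    rw [hρm, hρp]
    apply div_lt_div_of_pos_right (by linarith) hc3
  have hp0 : 0 < ρp := lt_trans h1 h2
  have h3' : 0 < G ρm := by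
    rw [hG]; positivity
  have h4 : 0 < G ρp := by
    rw [hG]; positivity
  have hcne : (1 + 2 * σ) ≠ 0 := ne_of_gt hc
  have key : G ρp < G ρm := by
    rw [hG, hG, hρm, hρp]
    have em : α - (1 + 2 * σ) * ((2 * α - s) / (3 * (1 + 2 * σ))) = (α + s) / 3 := by
      field_simp; ring
    have ep : α - (1 + 2 * σ) * ((2 * α + s) / (3 * (1 + 2 * σ))) = (α - s) / 3 := by
      field_simp; ring
    rw [em, ep, ← mul_div_assoc, ← mul_div_assoc, div_lt_div_iff₀ hc3 hc3]
    nlinarith [mul_pos (mul_pos (mul_pos hs0 hs0) hs0) hc, hs2, mul_pos hs0 hc, sq_nonneg s]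
  exact ⟨h1, h2, h3', h4, key⟩
end

section
/- Let σ ≥ 0, α > √3 and F > 0 with F² < G_α(ρ₊) or F² > G_α(ρ₋). Then the equation G_α(ρ) = F² has exactly one positive real solution. -/
set_option maxHeartbeats 1000000


theorem stmt_5 (σ α F : ℝ) (hσ : 0 ≤ σ) (hα : Real.sqrt 3 < α) (hF : 0 < F)
    (G : ℝ → ℝ) (hG : ∀ ρ, G ρ = (1 + (α - (1 + 2 * σ) * ρ) ^ 2) * ρ)
    (ρm ρp : ℝ)
    (hρm : ρm = (2 * α - Real.sqrt (α ^ 2 - 3)) / (3 * (1 + 2 * σ)))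
    (hρp : ρp = (2 * α + Real.sqrt (α ^ 2 - 3)) / (3 * (1 + 2 * σ)))
    (hF' : F ^ 2 < G ρp ∨ G ρm < F ^ 2) :
    ∃! ρ : ℝ, 0 < ρ ∧ G ρ = F ^ 2 := by
  have hc : (0:ℝ) < 1 + 2*σ := by linarith
  have hα0 : 0 < α := lt_of_le_of_lt (Real.sqrt_nonneg 3) hα
  have h3 : Real.sqrt 3 ^ 2 = 3 := Real.sq_sqrt (by norm_num)
  have hα3 : 3 < α ^ 2 := by nlinarith [Real.sqrt_nonneg 3]
  set s := Real.sqrt (α ^ 2 - 3) with hs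
  have hs2 : s ^ 2 = α ^ 2 - 3 := Real.sq_sqrt (by linarith)
  have hs0 : 0 < s := Real.sqrt_pos.mpr (by linarith)
  have hsα : s < α := by nlinarith
  have hρm0 : 0 < ρm := by
    rw [hρm]; exact div_pos (by linarith) (by linarith)
  have hmp : ρm < ρp := by
    rw [hρm, hρp]
    exact (div_lt_div_iff_of_pos_right (by linarith)).mpr (by linarith)
  have hρp0 : 0 < ρp := hρm0.trans hmp
  have hGeq : G = fun ρ => (1 + (α - (1 + 2 * σ) * ρ) ^ 2) * ρ := funext hG
  set f : ℝ → ℝ := fun ρ => (1 + (α - (1 + 2 * σ) * ρ) ^ 2) * ρ with hf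
  rw [hGeq] at hF' ⊢
  have hcont : Continuous f := by fun_prop
  have hd : ∀ x : ℝ, HasDerivAt f (3 * (1 + 2 * σ) ^ 2 * (x - ρm) * (x - ρp)) x := by
    intro x
    have h1 : HasDerivAt (fun ρ : ℝ => α - (1 + 2 * σ) * ρ) (-(1 + 2 * σ)) x := by
      simpa using ((hasDerivAt_id x).const_mul (1 + 2 * σ)).const_sub α
    have h4 := ((h1.pow 2).const_add 1).mul (hasDerivAt_id x)
    refine h4.congr_deriv (Eq.symm ?_)
    simp only [id, Pi.pow_apply, Nat.cast_ofNat]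
    rw [hρm, hρp]
    field_simp
    ring_nf
    nlinarith [hs2, sq_nonneg x]
  have hderiv : ∀ x, deriv f x = 3 * (1 + 2 * σ) ^ 2 * (x - ρm) * (x - ρp) :=
    fun x => (hd x).deriv
  have mono1 : StrictMonoOn f (Set.Iic ρm) := by
    apply strictMonoOn_of_deriv_pos (convex_Iic ρm) hcont.continuousOn
    intro x hx
    rw [interior_Iic] at hx
    rw [hderiv]
    have h1 : x - ρm < 0 := sub_neg.mpr (Set.mem_Iio.mp hx)
    have h2 : x - ρp < 0 := by nlinarith
    have hA : 3 * (1 + 2 * σ) ^ 2 * (x - ρm) < 0 :=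
      mul_neg_of_pos_of_neg (by positivity) h1
    exact mul_pos_of_neg_of_neg hA h2
  have anti : StrictAntiOn f (Set.Icc ρm ρp) := by
    apply strictAntiOn_of_deriv_neg (convex_Icc ρm ρp) hcont.continuousOn
    intro x hx
    rw [interior_Icc] at hx
    rw [hderiv]
    have h1 : 0 < x - ρm := sub_pos.mpr hx.1
    have h2 : x - ρp < 0 := sub_neg.mpr hx.2
    exact mul_neg_of_pos_of_neg (mul_pos (by positivity) h1) h2
  have mono2 : StrictMonoOn f (Set.Ici ρp) := by
    apply strictMonoOn_of_deriv_pos (convex_Ici ρp) hcont.continuousOn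
    intro x hx
    rw [interior_Ici] at hx
    rw [hderiv]
    have h1 : 0 < x - ρp := sub_pos.mpr (Set.mem_Ioi.mp hx)
    have h2 : 0 < x - ρm := by nlinarith
    exact mul_pos (mul_pos (by positivity) h2) h1
  have hpm : f ρp < f ρm := anti ⟨le_rfl, hmp.le⟩ ⟨hmp.le, le_rfl⟩ hmp
  have hf0 : f 0 = 0 := by simp [hf]
  rcases hF' with h | h
  · -- all solutions in Iic ρm
    have hFm : F ^ 2 < f ρm := h.trans hpm
    have hmem : F ^ 2 ∈ Set.Icc (f 0) (f ρm) := by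
      constructor
      · rw [hf0]; positivity
      · exact hFm.le
    obtain ⟨ρ, hρIcc, hfρ⟩ := intermediate_value_Icc hρm0.le hcont.continuousOn hmem
    have hρpos : 0 < ρ := by
      rcases eq_or_lt_of_le hρIcc.1 with h0 | h0
      · exfalso; rw [← h0, hf0] at hfρ; nlinarith
      · exact h0
    have key : ∀ y, 0 < y → f y = F ^ 2 → y ≤ ρm := by
      intro y hy hfy
      by_contra hcon
      push_neg at hcon
      rcases le_or_gt y ρp with hyp | hyp
      · rcases eq_or_lt_of_le hyp with he | hl
        · rw [he] at hfy; linarith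
        · have := anti ⟨hcon.le, hyp⟩ ⟨hmp.le, le_rfl⟩ hl
          linarith
      · have := mono2 Set.self_mem_Ici (le_of_lt hyp) hyp
        linarith
    refine ⟨ρ, ⟨hρpos, hfρ⟩, ?_⟩
    intro y ⟨hy, hfy⟩
    exact mono1.injOn (key y hy hfy) (key ρ hρpos hfρ) (hfy.trans hfρ.symm)
  · -- all solutions in Ici ρp
    have hpF : f ρp < F ^ 2 := hpm.trans h
    obtain ⟨M, hM1, hMF⟩ : ∃ M : ℝ, ρp < M ∧ F ^ 2 + 1 ≤ M :=
      ⟨max ρp (F ^ 2) + 1, by have := le_max_left ρp (F ^ 2); linarith,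
        by have := le_max_right ρp (F ^ 2); linarith⟩
    have hM0 : 0 < M := hρp0.trans hM1
    have hM2 : F ^ 2 < f M := by
      have h2 : M ≤ f M := by
        show M ≤ (1 + (α - (1 + 2 * σ) * M) ^ 2) * M
        nlinarith [sq_nonneg (α - (1 + 2 * σ) * M)]
      linarith
    have hmem : F ^ 2 ∈ Set.Icc (f ρp) (f M) := ⟨hpF.le, hM2.le⟩
    obtain ⟨ρ, hρIcc, hfρ⟩ := intermediate_value_Icc hM1.le hcont.continuousOn hmem
    have hρpos : 0 < ρ := hρp0.trans_le hρIcc.1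
    have key : ∀ y, 0 < y → f y = F ^ 2 → ρp ≤ y := by
      intro y hy hfy
      by_contra hcon
      push_neg at hcon
      rcases le_or_gt y ρm with hym | hym
      · rcases eq_or_lt_of_le hym with he | hl
        · rw [he] at hfy; linarith
        · have := mono1 (Set.mem_Iic.mpr hym) Set.self_mem_Iic hl
          linarith
      · have := anti ⟨le_rfl, hmp.le⟩ ⟨hym.le, hcon.le⟩ hym
        linarith
    refine ⟨ρ, ⟨hρpos, hfρ⟩, ?_⟩
    intro y ⟨hy, hfy⟩
    exact mono2.injOn (key y hy hfy) (key ρ hρpos hfρ) (hfy.trans hfρ.symm)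
end

section
/- Let ψ : ℝ₊ → L²(-π,π) be a (sufficiently smooth, 2π-periodic in space) solution of the Fabry–Perot Lugiato–Lefever equation ∂ₜψ = -i(β/2)∂²_θψ - (1+iα)ψ + iψ(|ψ|² + (σ/π)∫_{-π}^{π}|ψ(ζ,t)|²dζ) + F with periodic boundary conditions. Then for every T > 0, ‖ψ(·,T)‖² ≤ e^{-T}‖ψ(·,0)‖² + 2πF²(1 - e^{-T}), where ‖u‖² = ∫_{-π}^{π}|u(ζ)|²dζ. -/
open MeasureTheory

open Real in
theorem stmt_8 (β α σ F : ℝ) (hσ : σ = 0 ∨ σ = 1) (hF : 0 < F)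
    (ψ : ℝ → ℝ → ℂ)
    (hsmooth : ContDiff ℝ 2 (fun p : ℝ × ℝ => ψ p.1 p.2))
    (hper : ∀ t θ : ℝ, ψ t (θ + 2 * π) = ψ t θ)
    (hpde : ∀ t : ℝ, 0 ≤ t → ∀ θ : ℝ,
      deriv (fun s => ψ s θ) t =
        -Complex.I * ((β : ℂ) / 2) * iteratedDeriv 2 (fun x => ψ t x) θ
        - (1 + Complex.I * (α : ℂ)) * ψ t θ
        + Complex.I * ψ t θ *
          ((((‖ψ t θ‖) ^ 2
            + σ / π * ∫ ζ in (-π : ℝ)..π, (‖ψ t ζ‖) ^ 2 : ℝ)) : ℂ)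
        + (F : ℂ)) :
    ∀ T : ℝ, 0 < T →
      (∫ θ in (-π : ℝ)..π, (‖ψ T θ‖) ^ 2) ≤
        Real.exp (-T) * (∫ θ in (-π : ℝ)..π, (‖ψ 0 θ‖) ^ 2)
          + 2 * π * F ^ 2 * (1 - Real.exp (-T)) := by
  have hpi : (0:ℝ) < π := Real.pi_pos
  have hππ : (-π : ℝ) ≤ π := by linarith
  set Ψ : ℝ × ℝ → ℂ := fun p => ψ p.1 p.2 with hΨdef
  have hΨc : Continuous Ψ := hsmooth.continuous
  have hΨd : Differentiable ℝ Ψ := hsmooth.differentiable (by norm_num)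
  -- time derivative as a continuous function of both variables
  set D : ℝ × ℝ → ℂ := fun p => fderiv ℝ Ψ p (1, 0) with hDdef
  have hD : ∀ t θ : ℝ, HasDerivAt (fun s => ψ s θ) (D (t, θ)) t := by
    intro t θ
    have h2 : HasDerivAt (fun s : ℝ => ((s, θ) : ℝ × ℝ)) ((1 : ℝ), (0 : ℝ)) t :=
      (hasDerivAt_id t).prodMk (hasDerivAt_const t θ)
    have := (hΨd (t, θ)).hasFDerivAt.comp_hasDerivAt t h2
    simpa [Function.comp_def] using this
  have hDeq : ∀ t θ : ℝ, deriv (fun s => ψ s θ) t = D (t, θ) := fun t θ => (hD t θ).deriv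
  have hDcont : Continuous D :=
    (hsmooth.continuous_fderiv (by norm_num)).clm_apply continuous_const
  -- energy and its formal derivative
  set E : ℝ → ℝ := fun t => ∫ θ in (-π : ℝ)..π, Complex.normSq (ψ t θ) with hEdef
  set E' : ℝ → ℝ := fun t => ∫ θ in (-π : ℝ)..π,
      2 * ((starRingEnd ℂ) (ψ t θ) * D (t, θ)).re with hE'def
  have habs : ∀ t : ℝ, (∫ θ in (-π : ℝ)..π, (‖ψ t θ‖) ^ 2) = E t := by
    intro t; simp only [hEdef, Complex.sq_norm]
  -- continuity helpers
  have hψc : ∀ t : ℝ, Continuous (fun θ => ψ t θ) :=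
    fun t => hΨc.comp (continuous_const.prodMk continuous_id)
  have hfc : Continuous (fun p : ℝ × ℝ => 2 * ((starRingEnd ℂ) (Ψ p) * D p).re) := by
    have : Continuous (fun p : ℝ × ℝ => (starRingEnd ℂ) (Ψ p) * D p) :=
      (continuous_star.comp hΨc).mul hDcont
    exact (continuous_const.mul (Complex.continuous_re.comp this))
  -- pointwise time derivative of the energy density
  have hptw : ∀ t θ : ℝ, HasDerivAt (fun s => Complex.normSq (ψ s θ))
      (2 * ((starRingEnd ℂ) (ψ t θ) * D (t, θ)).re) t := by
    intro t θ
    have h := hD t θ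
    have hre : HasDerivAt (fun s => (ψ s θ).re) ((D (t, θ)).re) t :=
      Complex.reCLM.hasFDerivAt.comp_hasDerivAt t h
    have him : HasDerivAt (fun s => (ψ s θ).im) ((D (t, θ)).im) t :=
      Complex.imCLM.hasFDerivAt.comp_hasDerivAt t h
    have := (hre.mul hre).add (him.mul him)
    have heq : (fun s => (ψ s θ).re * (ψ s θ).re + (ψ s θ).im * (ψ s θ).im)
        = fun s => Complex.normSq (ψ s θ) := by
      funext s; simp [Complex.normSq_apply]
    change HasDerivAt (fun s => (ψ s θ).re * (ψ s θ).re + (ψ s θ).im * (ψ s θ).im) _ t at this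
    rw [heq] at this
    convert this using 1
    simp [Complex.mul_re, Complex.conj_re, Complex.conj_im]
    ring
  -- E is differentiable with derivative E'
  have hE : ∀ t : ℝ, HasDerivAt E (E' t) t := by
    intro t₀
    have hK : IsCompact (Set.Icc (t₀ - 1) (t₀ + 1) ×ˢ Set.Icc (-π : ℝ) π) :=
      (isCompact_Icc).prod isCompact_Icc
    obtain ⟨M, hM⟩ := hK.exists_bound_of_continuousOn hfc.continuousOn
    have key := intervalIntegral.hasDerivAt_integral_of_dominated_loc_of_deriv_le
      (F := fun s θ => Complex.normSq (ψ s θ))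
      (F' := fun s θ => 2 * ((starRingEnd ℂ) (ψ s θ) * D (s, θ)).re)
      (x₀ := t₀) (a := -π) (b := π) (μ := volume) (bound := fun _ => M) (s := Metric.ball t₀ 1) (Metric.ball_mem_nhds t₀ one_pos)
      ?_ ?_ ?_ ?_ ?_ ?_
    · exact key.2
    · filter_upwards with s
      exact ((Complex.continuous_normSq.comp (hψc s)).aestronglyMeasurable)
    · exact ((Complex.continuous_normSq.comp (hψc t₀)).intervalIntegrable _ _)
    · exact (Continuous.aestronglyMeasurable (by
        have : Continuous (fun θ : ℝ => 2 * ((starRingEnd ℂ) (Ψ (t₀, θ)) * D (t₀, θ)).re) :=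
          hfc.comp (continuous_const.prodMk continuous_id)
        exact this))
    · filter_upwards with θ hθ
      intro s hs
      have hθ' : θ ∈ Set.Icc (-π : ℝ) π := by
        have := Set.uIoc_of_le hππ ▸ hθ
        exact Set.mem_Icc.mpr ⟨le_of_lt this.1, this.2⟩
      have hs' : s ∈ Set.Icc (t₀ - 1) (t₀ + 1) := by
        rw [Metric.mem_ball, Real.dist_eq] at hs
        constructor <;> [linarith [abs_le.mp (le_of_lt hs)]; linarith [(abs_le.mp (le_of_lt hs)).2]]
      have := hM (s, θ) (Set.mk_mem_prod hs' hθ')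
      simpa using this
    · exact intervalIntegrable_const
    · filter_upwards with θ hθ
      intro s _
      exact hptw s θ
  -- the key differential inequality for t ≥ 0
  have hkey : ∀ t : ℝ, 0 ≤ t → E' t ≤ 2 * π * F ^ 2 - E t := by
    intro t ht
    set u : ℝ → ℂ := fun θ => ψ t θ with hudef
    have hu : ContDiff ℝ 2 u := hsmooth.comp (contDiff_const.prodMk contDiff_id)
    have hu2 : ContDiff ℝ ((1:ℕ)+1) u := by exact_mod_cast hu
    have hud : Differentiable ℝ u := hu.differentiable (by norm_num)
    have hu' : ContDiff ℝ 1 (deriv u) := (contDiff_succ_iff_deriv.mp hu2).2.2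
    have hdu : ∀ x, HasDerivAt u (deriv u x) x := fun x => (hud x).hasDerivAt
    have hddu : ∀ x, HasDerivAt (deriv u) (deriv (deriv u) x) x :=
      fun x => ((hu'.differentiable one_ne_zero) x).hasDerivAt
    have hu'c : Continuous (deriv u) := hu'.continuous
    have hu''c : Continuous (fun x => deriv (deriv u) x) := by
      have h1 : ContDiff ℝ ((0:ℕ)+1) (deriv u) := by exact_mod_cast hu'
      exact (contDiff_succ_iff_deriv.mp h1).2.2.continuous
    -- periodicity
    have hperu : Function.Periodic u (2 * π) := fun θ => hper t θ
    have huval : u π = u (-π) := by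
      have := hperu (-π); rw [show -π + 2 * π = π by ring] at this; exact this
    have hperu' : deriv u π = deriv u (-π) := by
      have h1 : deriv (fun y => u (y + 2 * π)) (-π) = deriv u (-π + 2 * π) :=
        deriv_comp_add_const u (2 * π) (-π)
      have h2 : (fun y => u (y + 2 * π)) = u := funext fun y => hperu y
      rw [h2, show -π + 2 * π = π by ring] at h1
      exact h1.symm
    -- integration by parts
    have hconj : ∀ x ∈ Set.uIcc (-π : ℝ) π,
        HasDerivAt (fun y => (starRingEnd ℂ) (u y)) ((starRingEnd ℂ) (deriv u x)) x := by
      intro x _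
      have := Complex.conjCLE.hasFDerivAt.comp_hasDerivAt x (hdu x)
      simpa [Function.comp_def] using this
    have hibp := intervalIntegral.integral_mul_deriv_eq_deriv_mul
      (u := fun y => (starRingEnd ℂ) (u y)) (u' := fun x => (starRingEnd ℂ) (deriv u x))
      (v := deriv u) (v' := fun x => deriv (deriv u) x)
      hconj (fun x _ => hddu x)
      ((continuous_star.comp hu'c).intervalIntegrable _ _)
      (hu''c.intervalIntegrable _ _)
    beta_reduce at hibp
    rw [huval, hperu'] at hibp
    have hsq : (∫ x in (-π : ℝ)..π, (starRingEnd ℂ) (deriv u x) * deriv u x)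
        = ((∫ x in (-π : ℝ)..π, Complex.normSq (deriv u x) : ℝ) : ℂ) := by
      rw [← intervalIntegral.integral_ofReal]
      congr 1; funext x
      rw [mul_comm, Complex.mul_conj]
    rw [hsq] at hibp
    have hibp' : (∫ x in (-π : ℝ)..π, (starRingEnd ℂ) (u x) * deriv (deriv u) x)
        = -((∫ x in (-π : ℝ)..π, Complex.normSq (deriv u x) : ℝ) : ℂ) := by
      rw [hibp]; ring
    -- evaluate E' t using the PDE
    have hEt : E t = ∫ θ in (-π : ℝ)..π, Complex.normSq (u θ) := rfl
    set ρ : ℝ → ℝ := fun θ => Complex.normSq (u θ)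
      + σ / π * ∫ ζ in (-π : ℝ)..π, Complex.normSq (u ζ) with hρdef
    have hDpde : ∀ θ : ℝ, D (t, θ) =
        -Complex.I * ((β : ℂ) / 2) * deriv (deriv u) θ
        - (1 + Complex.I * (α : ℂ)) * u θ
        + Complex.I * u θ * ((ρ θ : ℝ) : ℂ) + (F : ℂ) := by
      intro θ
      rw [← hDeq t θ, hpde t ht θ]
      congr 1
      · congr 1
        · congr 1
          rw [show (2 : ℕ) = 1 + 1 from rfl, iteratedDeriv_succ, iteratedDeriv_one]
        · congr 2
          simp only [hρdef, Complex.sq_norm]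
          rfl
    -- pointwise identity for the integrand of E'
    have hpoint : ∀ θ : ℝ, 2 * ((starRingEnd ℂ) (ψ t θ) * D (t, θ)).re
        = 2 * ((starRingEnd ℂ) (u θ) * (-Complex.I * ((β : ℂ) / 2) * deriv (deriv u) θ)).re
          - 2 * Complex.normSq (u θ) + 2 * F * (u θ).re := by
      intro θ
      rw [show ψ t θ = u θ from rfl, hDpde θ]
      simp only [Complex.mul_re, Complex.add_re, Complex.sub_re, Complex.add_im,
        Complex.sub_im, Complex.mul_im, Complex.conj_re, Complex.conj_im,
        Complex.I_re, Complex.I_im, Complex.ofReal_re, Complex.ofReal_im,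
        Complex.one_re, Complex.one_im, Complex.neg_re, Complex.neg_im,
        Complex.normSq_apply]
      ring
    -- integrability of the pieces
    have hc1 : Continuous (fun θ =>
        2 * ((starRingEnd ℂ) (u θ) * (-Complex.I * ((β : ℂ) / 2) * deriv (deriv u) θ)).re) := by
      exact continuous_const.mul (Complex.continuous_re.comp
        (((continuous_star.comp (hψc t)).mul (continuous_const.mul hu''c))))
    have hc2 : Continuous (fun θ => Complex.normSq (u θ)) :=
      Complex.continuous_normSq.comp (hψc t)
    have hc3 : Continuous (fun θ : ℝ => (u θ).re) := Complex.continuous_re.comp (hψc t)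
    -- the dispersive term integrates to zero
    have hzero : (∫ θ in (-π : ℝ)..π,
        2 * ((starRingEnd ℂ) (u θ) * (-Complex.I * ((β : ℂ) / 2) * deriv (deriv u) θ)).re) = 0 := by
      have hcc : Continuous (fun θ => (starRingEnd ℂ) (u θ) * deriv (deriv u) θ) :=
        (continuous_star.comp (hψc t)).mul hu''c
      have h1 : (fun θ => 2 * ((starRingEnd ℂ) (u θ)
          * (-Complex.I * ((β : ℂ) / 2) * deriv (deriv u) θ)).re)
          = fun θ => 2 * (Complex.reCLM ((-Complex.I * ((β : ℂ) / 2))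
              * ((starRingEnd ℂ) (u θ) * deriv (deriv u) θ))) := by
        funext θ; simp only [Complex.reCLM_apply]; ring_nf
      rw [h1, intervalIntegral.integral_const_mul]
      rw [ContinuousLinearMap.intervalIntegral_comp_comm _
        (show IntervalIntegrable (fun θ => -Complex.I * ((β : ℂ) / 2)
          * ((starRingEnd ℂ) (u θ) * deriv (deriv u) θ)) volume (-π) π from
          (continuous_const.mul hcc).intervalIntegrable _ _)]
      rw [intervalIntegral.integral_const_mul, hibp']
      simp
    -- compute E' t
    have hE'eq : E' t = -2 * E t + 2 * F * ∫ θ in (-π : ℝ)..π, (u θ).re := by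
      have : E' t = ∫ θ in (-π : ℝ)..π,
          (2 * ((starRingEnd ℂ) (u θ) * (-Complex.I * ((β : ℂ) / 2) * deriv (deriv u) θ)).re
          - 2 * Complex.normSq (u θ) + 2 * F * (u θ).re) := by
        simp only [hE'def]
        congr 1; funext θ; exact hpoint θ
      rw [this, intervalIntegral.integral_add, intervalIntegral.integral_sub, hzero]
      · rw [intervalIntegral.integral_const_mul, intervalIntegral.integral_const_mul, hEt]
        ring
      · exact hc1.intervalIntegrable _ _
      · exact (continuous_const.mul hc2).intervalIntegrable _ _
      · exact ((hc1.sub (continuous_const.mul hc2))).intervalIntegrable _ _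
      · exact (continuous_const.mul hc3).intervalIntegrable _ _
    -- bound the forcing term
    have hbound : 2 * F * (∫ θ in (-π : ℝ)..π, (u θ).re)
        ≤ 2 * π * F ^ 2 + E t := by
      have h1 : (∫ θ in (-π : ℝ)..π, 2 * F * (u θ).re)
          ≤ ∫ θ in (-π : ℝ)..π, (F ^ 2 + Complex.normSq (u θ)) := by
        apply intervalIntegral.integral_mono_on hππ
          ((continuous_const.mul hc3).intervalIntegrable _ _)
          ((continuous_const.add hc2).intervalIntegrable _ _)
        intro x _
        have h2 : 0 ≤ (F - (u x).re) ^ 2 := sq_nonneg _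
        have h3 : (u x).re ^ 2 ≤ Complex.normSq (u x) := by
          simp only [Complex.normSq_apply]; nlinarith [sq_nonneg (u x).im]
        show 2 * F * (u x).re ≤ F ^ 2 + Complex.normSq (u x)
        nlinarith
      rw [intervalIntegral.integral_const_mul] at h1
      rw [intervalIntegral.integral_add (intervalIntegrable_const) (hc2.intervalIntegrable _ _)] at h1
      rw [intervalIntegral.integral_const] at h1
      have : (π - -π) • F ^ 2 = 2 * π * F ^ 2 := by rw [smul_eq_mul]; ring
      rw [this] at h1
      exact h1
    linarith [hE'eq, hbound]
  -- Grönwall via monotonicity of G t = exp t * (E t - 2πF²)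
  intro T hT
  set c : ℝ := 2 * π * F ^ 2 with hcdef
  set G : ℝ → ℝ := fun t => Real.exp t * (E t - c) with hGdef
  have hG : ∀ t : ℝ, HasDerivAt G (Real.exp t * (E t - c) + Real.exp t * E' t) t := by
    intro t
    exact (Real.hasDerivAt_exp t).mul ((hE t).sub_const c)
  have hanti : AntitoneOn G (Set.Icc 0 T) := by
    apply antitoneOn_of_deriv_nonpos (convex_Icc 0 T)
    · exact fun x _ => ((hG x).continuousAt).continuousWithinAt
    · intro x hx
      exact ((hG x).differentiableAt).differentiableWithinAt
    · intro x hx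
      rw [interior_Icc] at hx
      rw [(hG x).deriv]
      have := hkey x (le_of_lt hx.1)
      have hex := Real.exp_pos x
      nlinarith
  have hGTle : G T ≤ G 0 := hanti (Set.left_mem_Icc.mpr (le_of_lt hT))
    (Set.right_mem_Icc.mpr (le_of_lt hT)) (le_of_lt hT)
  simp only [hGdef, Real.exp_zero, one_mul] at hGTle
  have hee : Real.exp (-T) * Real.exp T = 1 := by
    rw [← Real.exp_add]; simp
  have hen := Real.exp_pos (-T)
  rw [habs T, habs 0]
  have h2 : E T - c ≤ Real.exp (-T) * (E 0 - c) := by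
    have h3 := mul_le_mul_of_nonneg_left hGTle (le_of_lt hen)
    calc E T - c = Real.exp (-T) * Real.exp T * (E T - c) := by rw [hee]; ring
      _ = Real.exp (-T) * (Real.exp T * (E T - c)) := by ring
      _ ≤ Real.exp (-T) * (E 0 - c) := h3
  have hcc : c = 2 * π * F ^ 2 := rfl
  nlinarith [h2]
end

section
/- Any time-independent solution ψ = u₁ + iu₂ of the steady-state FP-LLE (-i(β/2)ψ'' - (1+iα)ψ + iψ(|ψ|² + (σ/π)‖ψ‖²) + F = 0 on (-π,π) with periodic boundary conditions) satisfies ‖ψ‖ ≤ √(2π)·F and ∫_{-π}^{π} u₁(θ)dθ > 0. -/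
open Real MeasureTheory Set Function

theorem pt_key (β α F r : ℝ) (a b : ℂ)
    (h : -Complex.I * ((β : ℂ) / 2) * b - (1 + Complex.I * (α : ℂ)) * a
      + Complex.I * a * (r : ℂ) + (F : ℂ) = 0) :
    (β/2) * (b * (starRingEnd ℂ) a).im - ‖a‖ ^ 2 + F * a.re = 0 := by
  have h1 := congrArg Complex.re h
  have h2 := congrArg Complex.im h
  simp only [Complex.add_re, Complex.add_im, Complex.sub_re, Complex.sub_im,
    Complex.mul_re, Complex.mul_im, Complex.neg_re, Complex.neg_im, Complex.I_re,
    Complex.I_im, Complex.ofReal_re, Complex.ofReal_im, Complex.one_re, Complex.one_im,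
    Complex.div_re, Complex.div_im, Complex.normSq_apply, Complex.zero_re, Complex.zero_im,
    Complex.re_ofNat, Complex.im_ofNat] at h1 h2
  rw [Complex.sq_norm, Complex.normSq_apply, Complex.mul_im]
  simp only [Complex.conj_re, Complex.conj_im]
  linear_combination a.re * h1 + a.im * h2

open Real in
theorem stmt_10 (β α σ F : ℝ) (hσ : σ = 0 ∨ σ = 1) (hF : 0 < F)
    (ψ : ℝ → ℂ) (hsmooth : ContDiff ℝ 2 ψ)
    (hper : ∀ θ : ℝ, ψ (θ + 2 * π) = ψ θ)
    (hode : ∀ θ : ℝ,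
      -Complex.I * ((β : ℂ) / 2) * iteratedDeriv 2 ψ θ
      - (1 + Complex.I * (α : ℂ)) * ψ θ
      + Complex.I * ψ θ *
        ((((‖ψ θ‖) ^ 2
          + σ / π * ∫ ζ in (-π : ℝ)..π, (‖ψ ζ‖) ^ 2 : ℝ)) : ℂ)
      + (F : ℂ) = 0) :
    Real.sqrt (∫ θ in (-π : ℝ)..π, (‖ψ θ‖) ^ 2)
        ≤ Real.sqrt (2 * π) * F ∧
    0 < ∫ θ in (-π : ℝ)..π, (ψ θ).re := by
  have hπ : (0:ℝ) < π := Real.pi_pos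
  have hcψ : Continuous ψ := hsmooth.continuous
  -- first derivative
  have hd1 : ∀ θ, HasDerivAt ψ (deriv ψ θ) θ := fun θ =>
    ((hsmooth.differentiable (by norm_num)) θ).hasDerivAt
  have h2' : ContDiff ℝ (1+1) ψ := by exact_mod_cast hsmooth
  have hC1 : ContDiff ℝ 1 (deriv ψ) := (contDiff_succ_iff_deriv.mp h2').2.2
  have hit : iteratedDeriv 2 ψ = deriv (deriv ψ) := by
    rw [show (2:ℕ) = 1+1 from rfl, iteratedDeriv_succ, iteratedDeriv_one]
  have hd2 : ∀ θ, HasDerivAt (deriv ψ) (iteratedDeriv 2 ψ θ) θ := fun θ => by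
    rw [hit]; exact ((contDiff_one_iff_deriv.mp hC1).1 θ).hasDerivAt
  have hc2 : Continuous (iteratedDeriv 2 ψ) := by
    rw [hit]; exact (contDiff_one_iff_deriv.mp hC1).2
  -- periodicity of the derivative
  have hper' : ∀ θ : ℝ, deriv ψ (θ + 2 * π) = deriv ψ θ := by
    intro θ
    have h1 : deriv (fun t => ψ (t + 2*π)) θ = deriv ψ (θ + 2*π) := deriv_comp_add_const _ _ _
    have h2 : (fun t => ψ (t + 2*π)) = ψ := funext hper
    rw [h2] at h1; exact h1.symm
  -- abbreviations
  set E := ∫ θ in (-π : ℝ)..π, (‖ψ θ‖) ^ 2 with hEdef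
  set R := ∫ θ in (-π : ℝ)..π, (ψ θ).re with hRdef
  set A := ∫ θ in (-π : ℝ)..π, ‖ψ θ‖ with hAdef
  -- continuity/integrability facts
  have hcabs : Continuous fun θ => ‖ψ θ‖ := continuous_norm.comp hcψ
  have hiA : IntervalIntegrable (fun θ => ‖ψ θ‖) volume (-π) π :=
    hcabs.intervalIntegrable _ _
  have hiE : IntervalIntegrable (fun θ => ‖ψ θ‖ ^ 2) volume (-π) π :=
    (hcabs.pow 2).intervalIntegrable _ _
  have hiR : IntervalIntegrable (fun θ => (ψ θ).re) volume (-π) π :=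
    (Complex.continuous_re.comp hcψ).intervalIntegrable _ _
  have hiIm : IntervalIntegrable
      (fun θ => (iteratedDeriv 2 ψ θ * (starRingEnd ℂ) (ψ θ)).im) volume (-π) π :=
    (Complex.continuous_im.comp (hc2.mul (Complex.continuous_conj.comp hcψ))).intervalIntegrable _ _
  -- FTC : the integral of im(ψ'' conj ψ) vanishes
  have hW : ∀ θ ∈ uIcc (-π : ℝ) π,
      HasDerivAt (fun t => (deriv ψ t * (starRingEnd ℂ) (ψ t)).im)
        ((iteratedDeriv 2 ψ θ * (starRingEnd ℂ) (ψ θ)).im) θ := by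
    intro θ _
    have hg : HasDerivAt (fun t => deriv ψ t * (starRingEnd ℂ) (ψ t))
        (iteratedDeriv 2 ψ θ * (starRingEnd ℂ) (ψ θ)
          + deriv ψ θ * (starRingEnd ℂ) (deriv ψ θ)) θ := by
      have := (hd2 θ).mul ((hd1 θ).star)
      simpa [mul_comm, Complex.star_def, Pi.mul_def] using this
    have him := Complex.imCLM.hasFDerivAt.comp_hasDerivAt θ hg
    simpa [Function.comp_def, Complex.mul_conj] using him
  have hFTC : (∫ θ in (-π:ℝ)..π, (iteratedDeriv 2 ψ θ * (starRingEnd ℂ) (ψ θ)).im) = 0 := by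
    rw [intervalIntegral.integral_eq_sub_of_hasDerivAt hW hiIm]
    have e1 : ψ π = ψ (-π) := by
      have := hper (-π); rw [show -π + 2*π = π by ring] at this; exact this
    have e2 : deriv ψ π = deriv ψ (-π) := by
      have := hper' (-π); rw [show -π + 2*π = π by ring] at this; exact this
    rw [e1, e2, sub_self]
  -- energy identity E = F * R
  have hE : E = F * R := by
    have hpt : ∀ θ, ‖ψ θ‖ ^ 2
        = (β/2) * (iteratedDeriv 2 ψ θ * (starRingEnd ℂ) (ψ θ)).im + F * (ψ θ).re := by
      intro θ
      have := pt_key β α F _ (ψ θ) (iteratedDeriv 2 ψ θ) (hode θ)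
      linarith
    calc E = ∫ θ in (-π:ℝ)..π,
          ((β/2) * (iteratedDeriv 2 ψ θ * (starRingEnd ℂ) (ψ θ)).im + F * (ψ θ).re) :=
        intervalIntegral.integral_congr (fun θ _ => hpt θ)
      _ = (β/2) * (∫ θ in (-π:ℝ)..π, (iteratedDeriv 2 ψ θ * (starRingEnd ℂ) (ψ θ)).im)
          + F * R := by
        rw [intervalIntegral.integral_add (hiIm.const_mul _) (hiR.const_mul _),
          intervalIntegral.integral_const_mul, intervalIntegral.integral_const_mul]
      _ = F * R := by rw [hFTC]; ring
  -- ψ is not identically zero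
  have hψne : ∃ θ0 ∈ Ioo (-π) π, ψ θ0 ≠ 0 := by
    by_contra hcon
    push_neg at hcon
    have h0 : ψ =ᶠ[nhds (0:ℝ)] (fun _ => (0:ℂ)) := by
      filter_upwards [Ioo_mem_nhds (show -π < (0:ℝ) by linarith) hπ] with t ht using hcon t ht
    have hd0 : deriv ψ =ᶠ[nhds (0:ℝ)] (fun _ => (0:ℂ)) := by
      have := h0.deriv
      simpa using this
    have hdd : iteratedDeriv 2 ψ 0 = 0 := by
      rw [hit]
      have := hd0.deriv.self_of_nhds
      simpa using this
    have := hode 0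
    rw [h0.self_of_nhds, hdd] at this
    simp at this
    exact hF.ne' this
  obtain ⟨θ0, hθ0, hne⟩ := hψne
  have hEpos : 0 < E := by
    rw [hEdef, intervalIntegral.integral_pos_iff_support_of_nonneg_ae
      (Filter.Eventually.of_forall (fun θ => sq_nonneg _)) hiE]
    refine ⟨by linarith, ?_⟩
    have hopen : IsOpen {θ : ℝ | ψ θ ≠ 0} := isOpen_ne_fun hcψ continuous_const
    have hpos : 0 < volume ({θ : ℝ | ψ θ ≠ 0} ∩ Ioo (-π) π) :=
      ((hopen.inter isOpen_Ioo).measure_pos volume ⟨θ0, hne, hθ0⟩)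
    refine lt_of_lt_of_le hpos (measure_mono ?_)
    rintro x ⟨hx1, hx2⟩
    refine ⟨?_, Ioo_subset_Ioc_self hx2⟩
    simp only [mem_support]
    exact pow_ne_zero 2 (norm_ne_zero_iff.mpr hx1)
  have hRpos : 0 < R := by
    nlinarith
  refine ⟨?_, hRpos⟩
  -- Cauchy-Schwarz : A^2 ≤ 2π E
  have hcs : A^2 ≤ 2*π*E := by
    have h0 : (0:ℝ) ≤ ∫ θ in (-π:ℝ)..π, (‖ψ θ‖ - A/(2*π))^2 :=
      intervalIntegral.integral_nonneg (by linarith) (fun θ _ => sq_nonneg _)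
    have hexp : (∫ θ in (-π:ℝ)..π, (‖ψ θ‖ - A/(2*π))^2)
        = E - 2*(A/(2*π))*A + (A/(2*π))^2*(2*π) := by
      have hptw : ∀ θ, (‖ψ θ‖ - A/(2*π))^2
          = ‖ψ θ‖^2 - (2*(A/(2*π)))*‖ψ θ‖ + (A/(2*π))^2 := by
        intro θ; ring
      rw [intervalIntegral.integral_congr (fun θ _ => hptw θ),
        intervalIntegral.integral_add (hiE.sub (hiA.const_mul _)) intervalIntegrable_const,
        intervalIntegral.integral_sub hiE (hiA.const_mul _),
        intervalIntegral.integral_const_mul, intervalIntegral.integral_const]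
      simp only [smul_eq_mul]
      ring
    rw [hexp] at h0
    have h2π : (0:ℝ) < 2*π := by linarith
    have key : E - 2*(A/(2*π))*A + (A/(2*π))^2*(2*π) = E - A^2/(2*π) := by
      field_simp; ring
    rw [key] at h0
    have h1 : A^2/(2*π) ≤ E := by linarith
    have h2 := (div_le_iff₀ h2π).mp h1
    linarith
  have hRA : R ≤ A := by
    refine intervalIntegral.integral_mono_on (by linarith) hiR hiA (fun θ _ => ?_)
    exact Complex.re_le_norm _
  have hApos : 0 ≤ A :=
    intervalIntegral.integral_nonneg (by linarith) (fun θ _ => norm_nonneg _)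
  have hEb : E ≤ 2*π*F^2 := by
    have hEA : E ≤ F * A := by
      rw [hE]; exact mul_le_mul_of_nonneg_left hRA hF.le
    nlinarith [sq_nonneg (F*A), hEA, hcs, hEpos, hF]
  calc Real.sqrt E ≤ Real.sqrt (2*π*F^2) := Real.sqrt_le_sqrt hEb
    _ = Real.sqrt (2*π) * F := by
      rw [Real.sqrt_mul (by linarith) (F^2), Real.sqrt_sq hF.le]
end

section
/- Fix β ∈ ℝ, α ∈ ℝ, σ ≥ 0. If β < 0, then there exist infinitely many k ∈ ℕ* for which the quadratic (4(σ+1)²-1)X² - 4(σ+1)(α - βk²/2)X + (α - βk²/2)² + 1 = 0 has a real root ρ ≥ 1; if β > 0, then only finitely many k ∈ ℕ* admit such a root. -/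
theorem stmt_18 (β α σ : ℝ) (hσ : 0 ≤ σ) :
    (β < 0 →
      {k : ℕ | 0 < k ∧ ∃ ρ : ℝ, 1 ≤ ρ ∧
        (4 * (σ + 1) ^ 2 - 1) * ρ ^ 2
          - 4 * (σ + 1) * (α - β * k ^ 2 / 2) * ρ
          + (α - β * k ^ 2 / 2) ^ 2 + 1 = 0}.Infinite) ∧
    (0 < β →
      {k : ℕ | 0 < k ∧ ∃ ρ : ℝ, 1 ≤ ρ ∧
        (4 * (σ + 1) ^ 2 - 1) * ρ ^ 2
          - 4 * (σ + 1) * (α - β * k ^ 2 / 2) * ρ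
          + (α - β * k ^ 2 / 2) ^ 2 + 1 = 0}.Finite) := by
  set s : ℝ := σ + 1 with hs
  have hs1 : 1 ≤ s := by simp [hs]; linarith
  set A : ℝ := 4 * s ^ 2 - 1 with hA
  have hA3 : 3 ≤ A := by nlinarith
  have hApos : 0 < A := by linarith
  constructor
  · intro hβ
    set N : ℕ := ⌈(2 * (A - α)) / (-β)⌉₊ + 1 with hN
    have key : ∀ k : ℕ, N ≤ k → k ∈ {k : ℕ | 0 < k ∧ ∃ ρ : ℝ, 1 ≤ ρ ∧
        (4 * (σ + 1) ^ 2 - 1) * ρ ^ 2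
          - 4 * (σ + 1) * (α - β * k ^ 2 / 2) * ρ
          + (α - β * k ^ 2 / 2) ^ 2 + 1 = 0} := by
      intro k hk
      have hk1 : 0 < k := lt_of_lt_of_le (Nat.succ_pos _) hk
      set y : ℝ := α - β * (k : ℝ) ^ 2 / 2 with hy
      have hkC : (2 * (A - α)) / (-β) ≤ (k : ℝ) := by
        calc (2 * (A - α)) / (-β) ≤ (⌈(2 * (A - α)) / (-β)⌉₊ : ℝ) := Nat.le_ceil _
        _ ≤ (N : ℝ) := by exact_mod_cast Nat.le_succ _
        _ ≤ (k : ℝ) := by exact_mod_cast hk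
      have hk1R : (1 : ℝ) ≤ (k : ℝ) := by exact_mod_cast hk1
      have hk2 : (2 * (A - α)) / (-β) ≤ (k : ℝ) ^ 2 := by nlinarith
      have hyA : A ≤ y := by
        have hnb : 0 < -β := by linarith
        have := (div_le_iff₀ hnb).mp hk2
        rw [hy]; nlinarith
      have hy1 : 1 ≤ y := le_trans (by linarith) hyA
      have hdisc : 0 ≤ y ^ 2 - A := by nlinarith
      set d : ℝ := Real.sqrt (y ^ 2 - A) with hd
      have hd0 : 0 ≤ d := Real.sqrt_nonneg _
      have hd2 : d ^ 2 = y ^ 2 - A := Real.sq_sqrt hdisc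
      refine ⟨hk1, (2 * s * y + d) / A, ?_, ?_⟩
      · rw [le_div_iff₀ hApos]; nlinarith
      · have hAne : A ≠ 0 := ne_of_gt hApos
        have hAρ : A * ((2 * s * y + d) / A) = 2 * s * y + d := by
          field_simp
        have hmain : A * (A * ((2 * s * y + d) / A) ^ 2
            - 4 * s * y * ((2 * s * y + d) / A) + y ^ 2 + 1) = 0 := by
          have : A * (A * ((2 * s * y + d) / A) ^ 2
              - 4 * s * y * ((2 * s * y + d) / A) + y ^ 2 + 1)
              = (A * ((2 * s * y + d) / A)) ^ 2
                - 4 * s * y * (A * ((2 * s * y + d) / A)) + A * (y ^ 2 + 1) := by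
            ring
          rw [this, hAρ, hA]
          linear_combination hd2
        have hX := (mul_eq_zero.mp hmain).resolve_left hAne
        have hAs : 4 * (σ + 1) ^ 2 - 1 = A := by rw [hA, hs]
        have hss : σ + 1 = s := hs.symm
        rw [show α - β * (k:ℝ) ^ 2 / 2 = y from hy.symm, hAs, hss]
        linarith [hX]
    exact (Set.Ici_infinite N).mono (fun k hk => key k hk)
  · intro hβ
    apply Set.Finite.subset (Set.finite_Iio (⌈2 * α / β⌉₊ + 1))
    rintro k ⟨hk1, ρ, hρ1, heq⟩
    simp only [Set.mem_Iio]
    set y : ℝ := α - β * (k : ℝ) ^ 2 / 2 with hy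
    have hypos : 0 < y := by
      by_contra h
      push_neg at h
      have hρ0 : 0 < ρ := lt_of_lt_of_le one_pos hρ1
      have hρ0' : (0:ℝ) ≤ ρ := le_of_lt hρ0
      have hny : (0:ℝ) ≤ -y := by linarith
      have h4s : (0:ℝ) ≤ 4 * s := by linarith
      nlinarith [mul_nonneg (mul_nonneg h4s hny) hρ0', sq_nonneg y, sq_nonneg ρ,
        mul_le_mul_of_nonneg_left (mul_le_mul hρ1 hρ1 (by linarith) hρ0') (le_of_lt hApos)]
    have hk2 : (k : ℝ) ^ 2 < 2 * α / β := by
      rw [lt_div_iff₀ hβ]; rw [hy] at hypos; nlinarith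
    have hkk : (k : ℝ) ≤ (k : ℝ) ^ 2 := by
      have : (1 : ℝ) ≤ (k : ℝ) := by exact_mod_cast hk1
      nlinarith
    have hle : 2 * α / β ≤ (⌈2 * α / β⌉₊ : ℝ) := Nat.le_ceil _
    have hfin : (k : ℝ) < ((⌈2 * α / β⌉₊ + 1 : ℕ) : ℝ) := by
      push_cast
      linarith
    exact_mod_cast hfin
end
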